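/- arXiv:2303.18158 — 2 statements merged into one kernel-verified Lean document; each statement's English description precedes it below -/
import Mathlib

section
/- Let H = {(τ, x, z) ∈ ℝ × X × Z : Σ_{i∈[d]} h_i(x_i) ≤ τ and x_i(1 − z_i) = 0 for all i ∈ [d]}, where X = {x ∈ ℝ^d : x_i ≥ 0 for all i ∈ I} for some I ⊆ [d], Z ⊆ {0,1}^d, and each h_i : ℝ → ℝ ∪ {+∞} is proper, lower semicontinuous, convex with h_i(0) = 0. If for every i ∈ [d] there exists z ∈ Z with z_i = 1, then the closed convex hull of H equals {(τ, x, z) ∈ ℝ × X × conv(Z) : Σ_{i∈[d]} h_i^π(x_i, z_i) ≤ τ}. -/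
/-!
The closed perspective is handled through its sublevel sets: `h^π(x, w) ≤ r` iff `w ≥ 0` and
`(w + s)⁻¹ • (r, x)` lies in the epigraph of `h` for every `s > 0`. The right-hand side is thereby
cut out by closed convex conditions, and it contains `H` since `h^π(x, 1) = h(x)` and
`h^π(0, 0) = 0`. Conversely, when all coordinates of `z` are positive, `(τ, x, z)` is the image of
`z ∈ conv Z` under an affine map sending `Z` into `H`. An arbitrary point of the right-hand side is
the limit of points of its segment towards `(0, 0, w)`, where `w ∈ conv Z` has positive coordinates
because every coordinate equals `1` at some point of `Z`.
-/

open scoped Classical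

/-- The closure `h^π` of the perspective function of `h : ℝ → ℝ ∪ {+∞}`. -/
noncomputable def perspCl (h : ℝ → EReal) (x w : ℝ) : EReal :=
  if 0 < w then (w : EReal) * h (x / w)
  else if w = 0 then
    Filter.limUnder (nhdsWithin (0 : ℝ) (Set.Ioi 0)) (fun s : ℝ => (s : EReal) * h (x / s))
  else ⊤

open Set Filter Topology

section PerspectiveCone

variable {E : Type*} [AddCommGroup E] [Module ℝ E] {S : Set E}

def perspCone (S : Set E) : Set (E × ℝ) :=
  {p | 0 < p.2 ∧ p.2⁻¹ • p.1 ∈ S}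

def perspConeCl (S : Set E) : Set (E × ℝ) :=
  {p | 0 ≤ p.2 ∧ ∀ s : ℝ, 0 < s → (p.2 + s)⁻¹ • p.1 ∈ S}

lemma smul_mem_perspCone {p : E × ℝ} (hp : p ∈ perspCone S) {t : ℝ} (ht : 0 < t) :
    t • p ∈ perspCone S := by
  refine ⟨mul_pos ht hp.1, ?_⟩
  simpa [smul_smul, mul_comm, mul_assoc, ht.ne'] using hp.2

lemma convex_perspCone (hS : Convex ℝ S) : Convex ℝ (perspCone S) := by
  rintro ⟨v₁, w₁⟩ ⟨hw₁, hv₁⟩ ⟨v₂, w₂⟩ ⟨hw₂, hv₂⟩ a b ha hb hab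
  have hw : 0 < a * w₁ + b * w₂ := convex_Ioi (0 : ℝ) hw₁ hw₂ ha hb hab
  refine ⟨hw, ?_⟩
  convert hS hv₁ hv₂ (div_nonneg (mul_nonneg ha hw₁.le) hw.le)
    (div_nonneg (mul_nonneg hb hw₂.le) hw.le) (by field_simp) using 1
  simp only [Prod.smul_mk, Prod.mk_add_mk, smul_eq_mul, smul_add, smul_smul]
  congr 2 <;> field_simp

lemma convex_perspConeCl (hS : Convex ℝ S) : Convex ℝ (perspConeCl S) := by
  rintro p ⟨hp₀, hp⟩ q ⟨hq₀, hq⟩ a b ha hb hab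
  refine ⟨by simp only [Prod.snd_add, Prod.smul_snd, smul_eq_mul]; positivity, fun s hs => ?_⟩
  have := (convex_perspCone hS (x := (p.1, p.2 + s)) ⟨add_pos_of_nonneg_of_pos hp₀ hs, hp s hs⟩
    (y := (q.1, q.2 + s)) ⟨add_pos_of_nonneg_of_pos hq₀ hs, hq s hs⟩ ha hb hab).2
  have hsnd : (a • p + b • q).2 + s = (a • (p.1, p.2 + s) + b • (q.1, q.2 + s)).2 := by
    simp only [Prod.snd_add, Prod.smul_snd, smul_eq_mul]
    linear_combination -s * hab
  rwa [hsnd]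

lemma mem_perspCone_of_le (hS : StarConvex ℝ 0 S) {v : E} {w w' : ℝ}
    (hp : (v, w) ∈ perspCone S) (hw : w ≤ w') : (v, w') ∈ perspCone S := by
  have hw' : 0 < w' := hp.1.trans_le hw
  refine ⟨hw', ?_⟩
  convert hS.smul_mem hp.2 (div_nonneg hp.1.le hw'.le) ((div_le_one hw').2 hw) using 1
  rw [smul_smul, div_mul_eq_mul_div, mul_inv_cancel₀ hp.1.ne', one_div]

lemma mem_perspConeCl_of_mem_perspCone (hS : StarConvex ℝ 0 S) {p : E × ℝ}
    (hp : p ∈ perspCone S) : p ∈ perspConeCl S :=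
  ⟨hp.1.le, fun _ hs => (mem_perspCone_of_le hS hp (le_add_of_nonneg_right hs.le)).2⟩

lemma smul_add_mem_perspCone {p : E × ℝ} (hp : p ∈ perspConeCl S) {t s : ℝ} (ht : 0 < t)
    (hs : 0 < s) : (t • p.1, t * p.2 + s) ∈ perspCone S := by
  have := smul_mem_perspCone (p := (p.1, p.2 + s / t))
    ⟨add_pos_of_nonneg_of_pos hp.1 (div_pos hs ht), hp.2 (s / t) (div_pos hs ht)⟩ ht
  convert this using 1
  simp only [Prod.smul_mk, smul_eq_mul, Prod.mk.injEq, true_and]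
  field_simp

variable [TopologicalSpace E] [ContinuousSMul ℝ E]

lemma isClosed_perspConeCl (hS : IsClosed S) : IsClosed (perspConeCl S) := by
  have hnonneg : IsClosed {p : E × ℝ | 0 ≤ p.2} :=
    isClosed_le (continuous_const (y := (0 : ℝ))) continuous_snd
  have : perspConeCl S = {p | 0 ≤ p.2} ∩
      ⋂ s ∈ Ioi (0 : ℝ), ({p | 0 ≤ p.2} ∩ (fun p : E × ℝ => (p.2 + s)⁻¹ • p.1) ⁻¹' S) := by
    ext p
    simp only [perspConeCl, mem_ofPred_eq, mem_inter_iff, mem_iInter, mem_Ioi, mem_preimage]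
    exact ⟨fun ⟨h₀, h⟩ => ⟨h₀, fun s hs => ⟨h₀, h s hs⟩⟩,
      fun ⟨h₀, h⟩ => ⟨h₀, fun s hs => (h s hs).2⟩⟩
  rw [this]
  refine hnonneg.inter (isClosed_biInter fun s (hs : 0 < s) => ?_)
  refine ContinuousOn.preimage_isClosed_of_isClosed ?_ hnonneg hS
  exact ((continuous_snd.add continuous_const).continuousOn.inv₀
    fun p (hp : 0 ≤ p.2) => (add_pos_of_nonneg_of_pos hp hs).ne').smul continuous_fst.continuousOn

lemma mem_perspConeCl_iff_of_pos (hS : StarConvex ℝ 0 S) (hSc : IsClosed S) {p : E × ℝ}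
    (hp : 0 < p.2) : p ∈ perspConeCl S ↔ p ∈ perspCone S := by
  refine ⟨fun h => ⟨hp, ?_⟩, mem_perspConeCl_of_mem_perspCone hS⟩
  have hlim : Tendsto (fun s : ℝ => (p.2 + s)⁻¹ • p.1) (𝓝[>] 0) (𝓝 (p.2⁻¹ • p.1)) := by
    have : ContinuousAt (fun s : ℝ => (p.2 + s)⁻¹ • p.1) 0 := by
      fun_prop (disch := simp [hp.ne'])
    simpa using this.tendsto.mono_left nhdsWithin_le_nhds
  exact hSc.mem_of_tendsto hlim (eventually_mem_nhdsWithin.mono fun s hs => h.2 s hs)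

end PerspectiveCone

namespace EReal

lemma coe_finset_sum {ι : Type*} (s : Finset ι) (f : ι → ℝ) :
    ((∑ i ∈ s, f i : ℝ) : EReal) = ∑ i ∈ s, (f i : EReal) :=
  map_sum (⟨⟨(↑), coe_zero⟩, coe_add⟩ : ℝ →+ EReal) f s

lemma sum_ne_bot {ι : Type*} {s : Finset ι} {f : ι → EReal} (hf : ∀ i ∈ s, f i ≠ ⊥) :
    ∑ i ∈ s, f i ≠ ⊥ := fun h =>
  let ⟨i, hi, hfi⟩ := WithBot.sum_eq_bot_iff.1 h
  hf i hi hfi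

lemma sum_le_coe_iff {ι : Type*} [Fintype ι] {f : ι → EReal} (hf : ∀ i, f i ≠ ⊥) {c : ℝ} :
    ∑ i, f i ≤ c ↔ ∃ a : ι → ℝ, (∀ i, f i ≤ a i) ∧ ∑ i, a i ≤ c := by
  constructor
  · intro hle
    have htop : ∀ i, f i ≠ ⊤ := by
      intro i hi
      rw [← Finset.add_sum_erase _ _ (Finset.mem_univ i), hi,
        top_add_of_ne_bot (sum_ne_bot fun j _ => hf j)] at hle
      exact coe_ne_top c (top_le_iff.1 hle)
    have hcoe : ∀ i, ((f i).toReal : EReal) = f i := fun i => coe_toReal (htop i) (hf i)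
    refine ⟨fun i => (f i).toReal, fun i => (hcoe i).ge, ?_⟩
    rwa [← EReal.coe_le_coe_iff, coe_finset_sum, Finset.sum_congr rfl fun i _ => hcoe i]
  · rintro ⟨a, hfa, hac⟩
    calc ∑ i, f i ≤ ∑ i, (a i : EReal) := Finset.sum_le_sum fun i _ => hfa i
      _ = (∑ i, a i : ℝ) := (coe_finset_sum _ _).symm
      _ ≤ c := EReal.coe_le_coe hac

lemma coe_mul_le_coe_iff {w r : ℝ} (hw : 0 < w) {y : EReal} :
    (w : EReal) * y ≤ r ↔ y ≤ (w⁻¹ * r : ℝ) := by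
  rw [mul_comm, inv_mul_eq_div, coe_div,
    le_div_iff_mul_le (EReal.coe_pos.2 hw) (coe_ne_top w)]

variable {α : Type*} [TopologicalSpace α]

lemma lowerSemicontinuous_of_isClosed_le_coe {f : α → EReal}
    (hf : ∀ r : ℝ, IsClosed {x | f x ≤ r}) : LowerSemicontinuous f := by
  refine lowerSemicontinuous_iff_isClosed_preimage.2 fun y => ?_
  have : f ⁻¹' Iic y = ⋂ r : {r : ℝ // y < r}, {x | f x ≤ r} := by
    ext x
    simp only [mem_preimage, mem_Iic, mem_iInter, Subtype.forall, mem_ofPred_eq]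
    exact le_of_forall_lt_iff_le.symm
  rw [this]
  exact isClosed_iInter fun r => hf r

lemma lowerSemicontinuous_sum {ι : Type*} (s : Finset ι) {f : ι → α → EReal}
    (hf : ∀ i ∈ s, LowerSemicontinuous (f i)) (hbot : ∀ i ∈ s, ∀ x, f i x ≠ ⊥) :
    LowerSemicontinuous fun x => ∑ i ∈ s, f i x := by
  induction s using Finset.cons_induction with
  | empty => simpa using lowerSemicontinuous_const
  | cons i s hi ih =>
    simp only [Finset.sum_cons]
    refine (hf i (s.mem_cons_self i)).add'
      (ih (fun j hj => hf j (Finset.mem_cons_of_mem hj))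
        fun j hj => hbot j (Finset.mem_cons_of_mem hj)) fun x => ?_
    exact continuousAt_add
      (.inr (sum_ne_bot fun j hj => hbot j (Finset.mem_cons_of_mem hj) x))
      (.inl (hbot i (s.mem_cons_self i) x))

end EReal

def realEpigraph (h : ℝ → EReal) : Set (ℝ × ℝ) :=
  {u | h u.2 ≤ u.1}

lemma LowerSemicontinuous.isClosed_realEpigraph {h : ℝ → EReal} (hh : LowerSemicontinuous h) :
    IsClosed (realEpigraph h) :=
  hh.isClosed_epigraph.preimage
    (continuous_snd.prodMk (continuous_coe_real_ereal.comp continuous_fst))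

section PerspCl

variable {h : ℝ → EReal} {x w r : ℝ}

lemma perspCl_of_pos (hw : 0 < w) : perspCl h x w = w * h (x / w) := if_pos hw

lemma perspCl_of_neg (hw : w < 0) : perspCl h x w = ⊤ := by
  simp [perspCl, hw.not_gt, hw.ne]

lemma perspCl_one : perspCl h x 1 = h x := by
  simp [perspCl_of_pos one_pos]

lemma perspCl_le_coe_iff_of_pos (hw : 0 < w) :
    perspCl h x w ≤ r ↔ ((r, x), w) ∈ perspCone (realEpigraph h) := by
  rw [perspCl_of_pos hw, EReal.coe_mul_le_coe_iff hw]
  simp [perspCone, realEpigraph, hw, div_eq_inv_mul]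

lemma perspCl_antitoneOn (hS : StarConvex ℝ 0 (realEpigraph h)) :
    AntitoneOn (perspCl h x) (Ioi 0) := by
  intro s hs t ht hst
  refine EReal.le_of_forall_lt_iff_le.1 fun r hr => ?_
  rw [perspCl_le_coe_iff_of_pos ht]
  exact mem_perspCone_of_le hS ((perspCl_le_coe_iff_of_pos hs).1 hr.le) hst

lemma perspCl_zero_eq_sSup (hS : StarConvex ℝ 0 (realEpigraph h)) :
    perspCl h x 0 = sSup (perspCl h x '' Ioi 0) := by
  have hlim := (perspCl_antitoneOn (x := x) hS).tendsto_nhdsGT (OrderTop.bddAbove _)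
  have heq : perspCl h x =ᶠ[𝓝[>] 0] fun s : ℝ => (s : EReal) * h (x / s) := by
    filter_upwards [self_mem_nhdsWithin] with s hs using perspCl_of_pos hs
  rw [perspCl, if_neg (lt_irrefl 0), if_pos rfl]
  exact (hlim.congr' heq).limUnder_eq

lemma perspCl_ne_bot (hS : StarConvex ℝ 0 (realEpigraph h)) (hbot : ∀ y, h y ≠ ⊥) :
    perspCl h x w ≠ ⊥ := by
  rcases lt_trichotomy w 0 with hw | rfl | hw
  · simp [perspCl_of_neg hw]
  · rw [perspCl_zero_eq_sSup hS]
    exact ne_bot_of_le_ne_bot (perspCl_one (h := h) ▸ hbot x)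
      (le_sSup ⟨1, show (0 : ℝ) < 1 from one_pos, rfl⟩)
  · rw [perspCl_of_pos hw]
    exact (EReal.mul_ne_bot _ _).2 ⟨.inl (EReal.coe_ne_bot w), .inr (hbot _),
      .inl (EReal.coe_ne_top w), .inl (EReal.coe_nonneg.2 hw.le)⟩

theorem perspCl_le_coe_iff (hS : StarConvex ℝ 0 (realEpigraph h))
    (hSc : IsClosed (realEpigraph h)) :
    perspCl h x w ≤ r ↔ ((r, x), w) ∈ perspConeCl (realEpigraph h) := by
  rcases lt_trichotomy w 0 with hw | rfl | hw
  · simp [perspCl_of_neg hw, perspConeCl, hw.not_ge]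
  · rw [perspCl_zero_eq_sSup hS, sSup_le_iff, forall_mem_image]
    simp only [perspConeCl, mem_ofPred_eq, le_refl, true_and, zero_add, mem_Ioi]
    refine forall₂_congr fun (s : ℝ) (hs : 0 < s) => ?_
    rw [perspCl_le_coe_iff_of_pos hs]
    simp [perspCone, hs]
  · rw [perspCl_le_coe_iff_of_pos hw, mem_perspConeCl_iff_of_pos hS hSc hw]

lemma lowerSemicontinuous_perspCl (hS : StarConvex ℝ 0 (realEpigraph h))
    (hSc : IsClosed (realEpigraph h)) : LowerSemicontinuous fun u : ℝ × ℝ => perspCl h u.1 u.2 :=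
  EReal.lowerSemicontinuous_of_isClosed_le_coe fun r => by
    simp_rw [perspCl_le_coe_iff hS hSc]
    exact (isClosed_perspConeCl hSc).preimage (by fun_prop)

end PerspCl

lemma exists_forall_pos_mem_convexHull {ι : Type*} [Fintype ι] {Z : Set (ι → ℝ)}
    (hZ : Z.Nonempty) (hZ0 : ∀ z ∈ Z, ∀ i, 0 ≤ z i) (hZ1 : ∀ i, ∃ z ∈ Z, z i = 1) :
    ∃ w ∈ convexHull ℝ Z, ∀ i, 0 < w i := by
  cases isEmpty_or_nonempty ι
  · obtain ⟨z, hz⟩ := hZ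
    exact ⟨z, subset_convexHull ℝ Z hz, isEmptyElim⟩
  choose ζ hζ hζ1 using hZ1
  refine ⟨Finset.univ.centerMass (fun _ => (1 : ℝ)) ζ, Finset.univ.centerMass_mem_convexHull
    (fun _ _ => zero_le_one) (by simp [Fintype.card_pos]) fun j _ => hζ j, fun i => ?_⟩
  simp only [Finset.centerMass, one_smul, Pi.smul_apply, Finset.sum_apply, smul_eq_mul]
  exact mul_pos (by simp [Fintype.card_pos]) (Finset.sum_pos' (fun j _ => hZ0 _ (hζ j) i)
    ⟨i, Finset.mem_univ i, by simp [hζ1 i]⟩)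

section Separable

variable {d : ℕ} (I : Set (Fin d)) (Z : Set (Fin d → ℝ)) (h : Fin d → ℝ → EReal)

def sepSet : Set (ℝ × (Fin d → ℝ) × (Fin d → ℝ)) :=
  {p | (∀ i ∈ I, 0 ≤ p.2.1 i) ∧ p.2.2 ∈ Z ∧ (∑ i, h i (p.2.1 i)) ≤ (p.1 : EReal) ∧
    ∀ i, p.2.1 i * (1 - p.2.2 i) = 0}

def sepPerspSet : Set (ℝ × (Fin d → ℝ) × (Fin d → ℝ)) :=
  {p | (∀ i ∈ I, 0 ≤ p.2.1 i) ∧ p.2.2 ∈ convexHull ℝ Z ∧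
    (∑ i, perspCl (h i) (p.2.1 i) (p.2.2 i)) ≤ (p.1 : EReal)}

variable {I Z h}

lemma mem_sepPerspSet_iff (hbot : ∀ i y, h i y ≠ ⊥) (hS : ∀ i, StarConvex ℝ 0 (realEpigraph (h i)))
    (hSc : ∀ i, IsClosed (realEpigraph (h i))) {p : ℝ × (Fin d → ℝ) × (Fin d → ℝ)} :
    p ∈ sepPerspSet I Z h ↔ (∀ i ∈ I, 0 ≤ p.2.1 i) ∧ p.2.2 ∈ convexHull ℝ Z ∧
      ∃ a : Fin d → ℝ, (∀ i, ((a i, p.2.1 i), p.2.2 i) ∈ perspConeCl (realEpigraph (h i))) ∧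
        ∑ i, a i ≤ p.1 := by
  simp only [sepPerspSet, mem_ofPred_eq,
    EReal.sum_le_coe_iff fun i => perspCl_ne_bot (hS i) (hbot i),
    fun i => perspCl_le_coe_iff (hS i) (hSc i)]

lemma sepSet_subset_sepPerspSet (hZ01 : ∀ z ∈ Z, ∀ i, z i = 0 ∨ z i = 1) (h0 : ∀ i, h i 0 = 0)
    (hS : ∀ i, StarConvex ℝ 0 (realEpigraph (h i))) (hSc : ∀ i, IsClosed (realEpigraph (h i))) :
    sepSet I Z h ⊆ sepPerspSet I Z h := by
  rintro ⟨τ, x, z⟩ ⟨hx, hz, hsum, hcompl⟩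
  dsimp only at hx hz hsum hcompl
  refine ⟨hx, subset_convexHull ℝ Z hz, le_trans (Finset.sum_le_sum fun i _ => ?_) hsum⟩
  show perspCl (h i) (x i) (z i) ≤ h i (x i)
  rcases hZ01 z hz i with hzi | hzi
  · have hxi : x i = 0 := by simpa [hzi] using hcompl i
    rw [hzi, hxi, h0 i, ← EReal.coe_zero, perspCl_le_coe_iff (hS i) (hSc i)]
    exact ⟨le_rfl, fun s _ => by simp [realEpigraph, h0 i]⟩
  · rw [hzi, perspCl_one]

lemma convex_sepPerspSet (hbot : ∀ i y, h i y ≠ ⊥) (hconv : ∀ i, Convex ℝ (realEpigraph (h i)))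
    (hS : ∀ i, StarConvex ℝ 0 (realEpigraph (h i))) (hSc : ∀ i, IsClosed (realEpigraph (h i))) :
    Convex ℝ (sepPerspSet I Z h) := by
  intro p hp q hq s t hs ht hst
  obtain ⟨hpx, hpz, a, ha, hpτ⟩ := (mem_sepPerspSet_iff hbot hS hSc).1 hp
  obtain ⟨hqx, hqz, b, hb, hqτ⟩ := (mem_sepPerspSet_iff hbot hS hSc).1 hq
  refine (mem_sepPerspSet_iff hbot hS hSc).2 ⟨fun i hi => ?_,
    convex_convexHull ℝ Z hpz hqz hs ht hst, s • a + t • b, fun i => ?_, ?_⟩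
  · simp only [Prod.snd_add, Prod.smul_snd, Prod.fst_add, Prod.smul_fst, Pi.add_apply,
      Pi.smul_apply, smul_eq_mul]
    exact add_nonneg (mul_nonneg hs (hpx i hi)) (mul_nonneg ht (hqx i hi))
  · convert convex_perspConeCl (hconv i) (ha i) (hb i) hs ht hst using 1
    simp
  · simp only [Pi.add_apply, Pi.smul_apply, smul_eq_mul, Finset.sum_add_distrib,
      ← Finset.mul_sum, Prod.fst_add, Prod.smul_fst]
    exact add_le_add (mul_le_mul_of_nonneg_left hpτ hs) (mul_le_mul_of_nonneg_left hqτ ht)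

lemma isClosed_sepPerspSet (hZ01 : ∀ z ∈ Z, ∀ i, z i = 0 ∨ z i = 1) (hbot : ∀ i y, h i y ≠ ⊥)
    (hS : ∀ i, StarConvex ℝ 0 (realEpigraph (h i))) (hSc : ∀ i, IsClosed (realEpigraph (h i))) :
    IsClosed (sepPerspSet I Z h) := by
  have hZfin : Z.Finite := (Set.Finite.pi' fun _ => ({0, 1} : Set ℝ).toFinite).subset
    fun z hz i => hZ01 z hz i
  have hF : LowerSemicontinuous fun p : ℝ × (Fin d → ℝ) × (Fin d → ℝ) =>
      ∑ i, perspCl (h i) (p.2.1 i) (p.2.2 i) :=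
    EReal.lowerSemicontinuous_sum _
      (fun i _ => (lowerSemicontinuous_perspCl (hS i) (hSc i)).comp
        (g := fun p : ℝ × (Fin d → ℝ) × (Fin d → ℝ) => (p.2.1 i, p.2.2 i)) (by fun_prop))
      fun i _ _ => perspCl_ne_bot (hS i) (hbot i)
  have hx : IsClosed {p : ℝ × (Fin d → ℝ) × (Fin d → ℝ) | ∀ i ∈ I, 0 ≤ p.2.1 i} := by
    simp only [ofPred_forall]
    exact isClosed_iInter fun i => isClosed_iInter fun _ =>
      isClosed_le continuous_const (by fun_prop)
  have hz : IsClosed {p : ℝ × (Fin d → ℝ) × (Fin d → ℝ) | p.2.2 ∈ convexHull ℝ Z} :=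
    (hZfin.isCompact_convexHull ℝ).isClosed.preimage (by fun_prop)
  have hτ : IsClosed {p : ℝ × (Fin d → ℝ) × (Fin d → ℝ) |
      ∑ i, perspCl (h i) (p.2.1 i) (p.2.2 i) ≤ (p.1 : EReal)} :=
    hF.isClosed_epigraph.preimage
      (continuous_id.prodMk (continuous_coe_real_ereal.comp continuous_fst))
  exact hx.inter (hz.inter hτ)

lemma mem_convexHull_sepSet (hZ01 : ∀ z ∈ Z, ∀ i, z i = 0 ∨ z i = 1) (h0 : ∀ i, h i 0 ≤ 0)
    {τ : ℝ} {a x w : Fin d → ℝ} (hx : ∀ i ∈ I, 0 ≤ x i) (hw : w ∈ convexHull ℝ Z)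
    (ha : ∀ i, ((a i, x i), w i) ∈ perspCone (realEpigraph (h i))) (hτ : ∑ i, a i ≤ τ) :
    (τ, x, w) ∈ convexHull ℝ (sepSet I Z h) := by
  let ℓ : (Fin d → ℝ) →ₗ[ℝ] ℝ × (Fin d → ℝ) × (Fin d → ℝ) :=
    (∑ i, ((w i)⁻¹ * a i) • LinearMap.proj i).prod
      ((LinearMap.pi fun i => ((w i)⁻¹ * x i) • LinearMap.proj i).prod LinearMap.id)
  let L := ℓ.toAffineMap + AffineMap.const ℝ (Fin d → ℝ)
    ((τ - ∑ i, a i, 0, 0) : ℝ × (Fin d → ℝ) × (Fin d → ℝ))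
  have hL (ζ : Fin d → ℝ) : L ζ =
      (∑ i, ζ i * ((w i)⁻¹ * a i) + (τ - ∑ i, a i), fun i => ζ i * ((w i)⁻¹ * x i), ζ) := by
    simp [L, ℓ, mul_comm, funext_iff]
  have hLw : L w = (τ, x, w) := by
    have hw0 (i : Fin d) : w i ≠ 0 := (ha i).1.ne'
    simp [hL, hw0]
  have hLZ : L '' Z ⊆ sepSet I Z h := by
    rintro _ ⟨ζ, hζ, rfl⟩
    rw [hL]
    refine ⟨fun i hi => ?_, hζ, ?_, fun i => ?_⟩
    · exact mul_nonneg (by rcases hZ01 ζ hζ i with hζi | hζi <;> simp [hζi])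
        (mul_nonneg (inv_nonneg.2 (ha i).1.le) (hx i hi))
    · calc ∑ i, h i (ζ i * ((w i)⁻¹ * x i))
          ≤ ∑ i, ((ζ i * ((w i)⁻¹ * a i) : ℝ) : EReal) := Finset.sum_le_sum fun i _ => by
            rcases hZ01 ζ hζ i with hζi | hζi
            · simpa [hζi] using h0 i
            · simpa [hζi, realEpigraph] using (ha i).2
        _ = (∑ i, ζ i * ((w i)⁻¹ * a i) : ℝ) := (EReal.coe_finset_sum _ _).symm
        _ ≤ _ := EReal.coe_le_coe (le_add_of_nonneg_right (sub_nonneg.2 hτ))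
    · rcases hZ01 ζ hζ i with hζi | hζi <;> simp [hζi]
  rw [← hLw]
  exact convexHull_mono hLZ (L.image_convexHull Z ▸ mem_image_of_mem L hw)

lemma sepPerspSet_subset_closure_convexHull (hZ01 : ∀ z ∈ Z, ∀ i, z i = 0 ∨ z i = 1)
    (hZ1 : ∀ i, ∃ z ∈ Z, z i = 1) (h0 : ∀ i, h i 0 ≤ 0) (hbot : ∀ i y, h i y ≠ ⊥)
    (hS : ∀ i, StarConvex ℝ 0 (realEpigraph (h i))) (hSc : ∀ i, IsClosed (realEpigraph (h i))) :
    sepPerspSet I Z h ⊆ closure (convexHull ℝ (sepSet I Z h)) := by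
  rintro ⟨τ, x, z⟩ hp
  obtain ⟨hx, hz, a, ha, hτ⟩ := (mem_sepPerspSet_iff hbot hS hSc).1 hp
  obtain ⟨w, hw, hw0⟩ := exists_forall_pos_mem_convexHull (convexHull_nonempty_iff.1 ⟨z, hz⟩)
    (fun z hz i => by rcases hZ01 z hz i with hzi | hzi <;> simp [hzi]) hZ1
  refine closure_mono ?_
    (segment_subset_closure_openSegment (left_mem_segment ℝ (τ, x, z) (0, 0, w)))
  rintro _ ⟨s, t, hs, ht, hst, rfl⟩
  have hpt : s • (τ, x, z) + t • ((0 : ℝ), (0 : Fin d → ℝ), w) = (s * τ, s • x, s • z + t • w) := by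
    simp
  rw [hpt]
  exact mem_convexHull_sepSet hZ01 h0 (a := s • a) (fun i hi => mul_nonneg hs.le (hx i hi))
    (convex_convexHull ℝ Z hz hw hs.le ht.le hst)
    (fun i => by simpa using smul_add_mem_perspCone (ha i) hs (mul_pos ht (hw0 i)))
    (by simpa [← Finset.mul_sum] using mul_le_mul_of_nonneg_left hτ hs.le)

end Separable

theorem closure_convexHull_separable_general {d : ℕ} (I : Set (Fin d))
    (Z : Set (Fin d → ℝ)) (hZ01 : ∀ z ∈ Z, ∀ i, z i = 0 ∨ z i = 1)
    (hZ1 : ∀ i : Fin d, ∃ z ∈ Z, z i = 1)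
    (h : Fin d → ℝ → EReal)
    (hbot : ∀ i, ∀ x : ℝ, h i x ≠ ⊥)
    (hlsc : ∀ i, LowerSemicontinuous (h i))
    (hconv : ∀ i, Convex ℝ {u : ℝ × ℝ | h i u.2 ≤ (u.1 : EReal)})
    (h0 : ∀ i, h i 0 = 0) :
    closure (convexHull ℝ
      {p : ℝ × (Fin d → ℝ) × (Fin d → ℝ) |
        (∀ i ∈ I, 0 ≤ p.2.1 i) ∧ p.2.2 ∈ Z ∧
        (∑ i, h i (p.2.1 i)) ≤ (p.1 : EReal) ∧
        ∀ i, p.2.1 i * (1 - p.2.2 i) = 0})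
      = {p : ℝ × (Fin d → ℝ) × (Fin d → ℝ) |
        (∀ i ∈ I, 0 ≤ p.2.1 i) ∧ p.2.2 ∈ convexHull ℝ Z ∧
        (∑ i, perspCl (h i) (p.2.1 i) (p.2.2 i)) ≤ (p.1 : EReal)} := by
  have hS (i : Fin d) : StarConvex ℝ 0 (realEpigraph (h i)) :=
    (hconv i).starConvex (show h i 0 ≤ ((0 : ℝ) : EReal) by simp [h0 i])
  have hSc (i : Fin d) : IsClosed (realEpigraph (h i)) := (hlsc i).isClosed_realEpigraph
  change closure (convexHull ℝ (sepSet I Z h)) = sepPerspSet I Z h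
  refine subset_antisymm ?_
    (sepPerspSet_subset_closure_convexHull hZ01 hZ1 (fun i => (h0 i).le) hbot hS hSc)
  exact closure_minimal (convexHull_min (sepSet_subset_sepPerspSet hZ01 h0 hS hSc)
    (convex_sepPerspSet hbot hconv hS hSc)) (isClosed_sepPerspSet hZ01 hbot hS hSc)

/-- Closed convex hull of the separable set `H` (Theorem on separable functions):
`cl conv(H) = {(τ, x, z) ∈ ℝ × X × conv(Z) : Σ_i h_i^π(x_i, z_i) ≤ τ}`. -/
theorem closure_convexHull_separable {d : ℕ} (I : Set (Fin d))
    (Z : Set (Fin d → ℝ)) (hZ01 : ∀ z ∈ Z, ∀ i, z i = 0 ∨ z i = 1)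
    (hZ1 : ∀ i : Fin d, ∃ z ∈ Z, z i = 1)
    (h : Fin d → ℝ → EReal)
    (hbot : ∀ i, ∀ x : ℝ, h i x ≠ ⊥) (hnetop : ∀ i, ∃ x : ℝ, h i x ≠ ⊤)
    (hlsc : ∀ i, LowerSemicontinuous (h i))
    (hconv : ∀ i, Convex ℝ {u : ℝ × ℝ | h i u.2 ≤ (u.1 : EReal)})
    (h0 : ∀ i, h i 0 = 0) :
    closure (convexHull ℝ
      {p : ℝ × (Fin d → ℝ) × (Fin d → ℝ) |
        (∀ i ∈ I, 0 ≤ p.2.1 i) ∧ p.2.2 ∈ Z ∧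
        (∑ i, h i (p.2.1 i)) ≤ (p.1 : EReal) ∧
        ∀ i, p.2.1 i * (1 - p.2.2 i) = 0})
      = {p : ℝ × (Fin d → ℝ) × (Fin d → ℝ) |
        (∀ i ∈ I, 0 ≤ p.2.1 i) ∧ p.2.2 ∈ convexHull ℝ Z ∧
        (∑ i, perspCl (h i) (p.2.1 i) (p.2.2 i)) ≤ (p.1 : EReal)} :=
  closure_convexHull_separable_general I Z hZ01 hZ1 h hbot hlsc hconv h0
end

section
/- Let T = {(τ, x, z) ∈ ℝ × ℝ^d × Z : h(aᵀx) ≤ τ and x_i(1 − z_i) = 0 for all i ∈ [d]}, where Z ⊆ {0,1}^d with Z ≠ {0}, the graph G_Z is connected, a ∈ ℝ^d has a_i ≠ 0 for all i, and h : ℝ → ℝ ∪ {+∞} is proper, lower semicontinuous, convex with h(0) = 0. Then the closed convex hull of T equals {(τ, x, z) ∈ ℝ × ℝ^d × ℝ^d : there exists w ∈ ℝ such that h^π(aᵀx, w) ≤ τ and (w, z) ∈ conv(Δ₁)}, where Δ₁ = {(w, z) ∈ {0,1} × Z : w ≤ Σ_{i∈[d]} z_i}. -/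
/-!
Every closed proper convex `h` is the supremum of its affine minorants `y ↦ p y + c` (Hahn–Banach
in the plane), so for `w ≥ 0` the closed perspective `h^π(x, w)` is the supremum of the linear
functions `p x + c w`, with `c ≤ 0` because `h 0 = 0`. Hence the right-hand side `S` is convex, and
closed because `w` ranges over the compact interval `[0, 1]`; as `T ⊆ S`, also `cl conv T ⊆ S`.

Conversely, a convex combination of points of `Δ₁` lifts to a point of `conv T` with the prescribed
`τ`, `z` and `aᵀx`, by putting all the `x`-mass of a point with `w = 1` on one coordinate where
`z` is `1`. For an edge `{i, j}` of `G_Z` the whole line through `(0, 0, z)` in direction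
`(0, e_i / a_i - e_j / a_j, 0)` lies in `T`, so these directions lie in the lineality space of
`cl conv T`; connectivity of `G_Z` makes them span the hyperplane `aᵀv = 0`, which frees the
`x`-coordinate. When `w = 0`, the ray `(s τ, s (aᵀx) e_i / a_i, z')` with `z'_i = 1` lies in `T`
and supplies the missing `τ`.
-/

open scoped Classical

/-- The graph `G_Z` on `[d]` associated with `Z ⊆ {0,1}^d`. -/
def graphOfZ {d : ℕ} (Z : Set (Fin d → ℝ)) : SimpleGraph (Fin d) :=
  SimpleGraph.fromRel (fun i j => ∃ z ∈ Z, z i = 1 ∧ z j = 1)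

open Set Filter Topology

section AffineMinorants

variable {h : ℝ → EReal}

def affineMinorants (h : ℝ → EReal) : Set (ℝ × ℝ) :=
  {pc | ∀ y, ((pc.1 * y + pc.2 : ℝ) : EReal) ≤ h y}

lemma LowerSemicontinuous.isClosed_setOf_le_fst (hlsc : LowerSemicontinuous h) :
    IsClosed {u : ℝ × ℝ | h u.2 ≤ (u.1 : EReal)} :=
  hlsc.isClosed_epigraph.preimage
    (continuous_snd.prodMk (continuous_coe_real_ereal.comp continuous_fst))

lemma exists_separation_of_lt (hlsc : LowerSemicontinuous h)
    (hconv : Convex ℝ {u : ℝ × ℝ | h u.2 ≤ (u.1 : EReal)}) {y t : ℝ} (hty : (t : EReal) < h y) :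
    ∃ α β u : ℝ, (∀ T y₀ : ℝ, h y₀ ≤ T → α * T + β * y₀ < u) ∧ u < α * t + β * y := by
  obtain ⟨f, u, hf, hu⟩ := geometric_hahn_banach_closed_point hconv hlsc.isClosed_setOf_le_fst
    (show (t, y) ∉ {u : ℝ × ℝ | h u.2 ≤ (u.1 : EReal)} from hty.not_ge)
  have hf_apply (T y₀ : ℝ) : f (T, y₀) = f (1, 0) * T + f (0, 1) * y₀ := by
    rw [show ((T, y₀) : ℝ × ℝ) = T • (1, 0) + y₀ • (0, 1) by simp, map_add, map_smul, map_smul,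
      smul_eq_mul, smul_eq_mul, mul_comm T, mul_comm y₀]
  exact ⟨f (1, 0), f (0, 1), u, fun T y₀ hT => hf_apply T y₀ ▸ hf (T, y₀) hT, hf_apply t y ▸ hu⟩

lemma separation_coeff_nonpos {α β u y₁ : ℝ} (hsep : ∀ T y₀ : ℝ, h y₀ ≤ T → α * T + β * y₀ < u)
    (hy₁ : h y₁ ≠ ⊤) : α ≤ 0 := by
  by_contra! hα
  set T := max (h y₁).toReal ((u - β * y₁) / α)
  have hlt := hsep T y₁ ((EReal.le_coe_toReal hy₁).trans (by exact_mod_cast le_max_left _ _))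
  have hle : (u - β * y₁) / α ≤ T := le_max_right _ _
  rw [div_le_iff₀ hα] at hle
  linarith

lemma mem_affineMinorants_of_separation {α β u : ℝ} (hα : α < 0)
    (hsep : ∀ T y₀ : ℝ, h y₀ ≤ T → α * T + β * y₀ < u) :
    (-β / α, u / α) ∈ affineMinorants h := fun y₀ =>
  EReal.le_of_forall_lt_iff_le.1 fun T hT => by
    have hlt := hsep T y₀ hT.le
    have hle : -β / α * y₀ + u / α ≤ T := by
      rw [show -β / α * y₀ + u / α = (u - β * y₀) / α by ring, div_le_iff_of_neg hα]
      linarith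
    exact_mod_cast hle

lemma affineMinorants_nonempty (hbot : ∀ x : ℝ, h x ≠ ⊥) (hnetop : ∃ x : ℝ, h x ≠ ⊤)
    (hlsc : LowerSemicontinuous h) (hconv : Convex ℝ {u : ℝ × ℝ | h u.2 ≤ (u.1 : EReal)}) :
    (affineMinorants h).Nonempty := by
  obtain ⟨y₁, hy₁⟩ := hnetop
  set H := (h y₁).toReal
  have hH : h y₁ = H := (EReal.coe_toReal hy₁ (hbot y₁)).symm
  obtain ⟨α, β, u, hsep, hu⟩ := exists_separation_of_lt hlsc hconv
    (show ((H - 1 : ℝ) : EReal) < h y₁ by rw [hH]; exact_mod_cast sub_one_lt H)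
  have hα : α < 0 := by
    refine (separation_coeff_nonpos hsep hy₁).lt_of_ne ?_
    rintro rfl
    linarith [hsep H y₁ hH.le]
  exact ⟨_, mem_affineMinorants_of_separation hα hsep⟩

lemma add_mem_affineMinorants {pc : ℝ × ℝ} (hpc : pc ∈ affineMinorants h) {μ β u : ℝ}
    (hμ : 0 ≤ μ) (hdom : ∀ y, h y ≠ ⊤ → β * y ≤ u) :
    (pc.1 + μ * β, pc.2 - μ * u) ∈ affineMinorants h := by
  intro y
  by_cases hy : h y = ⊤
  · simp [hy]
  · refine le_trans ?_ (hpc y)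
    have := mul_le_mul_of_nonneg_left (hdom y hy) hμ
    exact_mod_cast (by linarith : (pc.1 + μ * β) * y + (pc.2 - μ * u) ≤ pc.1 * y + pc.2)

lemma exists_affineMinorant_gt (hbot : ∀ x : ℝ, h x ≠ ⊥) (hnetop : ∃ x : ℝ, h x ≠ ⊤)
    (hlsc : LowerSemicontinuous h) (hconv : Convex ℝ {u : ℝ × ℝ | h u.2 ≤ (u.1 : EReal)})
    {y t : ℝ} (hty : (t : EReal) < h y) :
    ∃ pc ∈ affineMinorants h, t < pc.1 * y + pc.2 := by
  obtain ⟨α, β, u, hsep, hu⟩ := exists_separation_of_lt hlsc hconv hty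
  obtain ⟨y₁, hy₁⟩ := hnetop
  rcases (separation_coeff_nonpos hsep hy₁).lt_or_eq with hα | rfl
  · refine ⟨_, mem_affineMinorants_of_separation hα hsep, ?_⟩
    rw [show -β / α * y + u / α = (u - β * y) / α by ring, lt_div_iff_of_neg hα]
    linarith
  -- A vertical separating line: tilt an arbitrary minorant by it until it passes above `(t, y)`.
  obtain ⟨pc, hpc⟩ := affineMinorants_nonempty hbot ⟨y₁, hy₁⟩ hlsc hconv
  have hdom (y₀ : ℝ) (hy₀ : h y₀ ≠ ⊤) : β * y₀ ≤ u := by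
    linarith [hsep _ y₀ (EReal.le_coe_toReal hy₀)]
  have hδ : 0 < β * y - u := by linarith
  set μ := (|t - (pc.1 * y + pc.2)| + 1) / (β * y - u)
  refine ⟨_, add_mem_affineMinorants (μ := μ) hpc (div_nonneg (by positivity) hδ.le) hdom, ?_⟩
  have : μ * (β * y - u) = |t - (pc.1 * y + pc.2)| + 1 := div_mul_cancel₀ _ hδ.ne'
  nlinarith [le_abs_self (t - (pc.1 * y + pc.2))]

end AffineMinorants

section PerspSup

variable {h : ℝ → EReal}

/-- For `w ≥ 0` this is `h^π(x, w)` (`perspCl_eq_perspSup`); as a supremum of linear functions it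
has a convex closed epigraph. -/
noncomputable def perspSup (h : ℝ → EReal) (x w : ℝ) : EReal :=
  ⨆ pc ∈ affineMinorants h, ((pc.1 * x + pc.2 * w : ℝ) : EReal)

lemma perspSup_le_iff {x w : ℝ} {τ : EReal} :
    perspSup h x w ≤ τ ↔ ∀ pc ∈ affineMinorants h, ((pc.1 * x + pc.2 * w : ℝ) : EReal) ≤ τ :=
  iSup₂_le_iff

lemma le_perspSup {pc : ℝ × ℝ} (hpc : pc ∈ affineMinorants h) (x w : ℝ) :
    ((pc.1 * x + pc.2 * w : ℝ) : EReal) ≤ perspSup h x w :=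
  le_iSup₂_of_le pc hpc le_rfl

lemma affineMinorants_snd_nonpos (h0 : h 0 = 0) {pc : ℝ × ℝ} (hpc : pc ∈ affineMinorants h) :
    pc.2 ≤ 0 := by
  have := hpc 0
  rw [h0] at this
  exact_mod_cast (by simpa using this : ((pc.2 : ℝ) : EReal) ≤ 0)

lemma perspSup_one_le (y : ℝ) : perspSup h y 1 ≤ h y :=
  perspSup_le_iff.2 fun pc hpc => by simpa using hpc y

lemma perspSup_one (hbot : ∀ x : ℝ, h x ≠ ⊥) (hnetop : ∃ x : ℝ, h x ≠ ⊤)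
    (hlsc : LowerSemicontinuous h) (hconv : Convex ℝ {u : ℝ × ℝ | h u.2 ≤ (u.1 : EReal)})
    (y : ℝ) : perspSup h y 1 = h y := by
  refine (perspSup_one_le y).antisymm (EReal.ge_of_forall_gt_iff_ge.1 fun t ht => ?_)
  obtain ⟨pc, hpc, hlt⟩ := exists_affineMinorant_gt hbot hnetop hlsc hconv ht
  refine le_trans ?_ (le_perspSup hpc y 1)
  exact_mod_cast (by simpa using hlt.le : t ≤ pc.1 * y + pc.2 * 1)

lemma perspSup_mul_le {c : ℝ} (hc : 0 ≤ c) (x w : ℝ) :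
    perspSup h (c * x) (c * w) ≤ c * perspSup h x w :=
  perspSup_le_iff.2 fun pc hpc => calc
    ((pc.1 * (c * x) + pc.2 * (c * w) : ℝ) : EReal) = c * ((pc.1 * x + pc.2 * w : ℝ) : EReal) := by
      rw [← EReal.coe_mul]; ring_nf
    _ ≤ c * perspSup h x w := mul_le_mul_of_nonneg_left (le_perspSup hpc x w) (by exact_mod_cast hc)

lemma perspSup_mul {c : ℝ} (hc : 0 < c) (x w : ℝ) :
    perspSup h (c * x) (c * w) = c * perspSup h x w := by
  refine (perspSup_mul_le hc.le x w).antisymm ?_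
  calc (c : EReal) * perspSup h x w
      = c * perspSup h (c⁻¹ * (c * x)) (c⁻¹ * (c * w)) := by simp [hc.ne']
    _ ≤ c * (c⁻¹ * perspSup h (c * x) (c * w)) :=
      mul_le_mul_of_nonneg_left (perspSup_mul_le (inv_nonneg.2 hc.le) _ _) (by exact_mod_cast hc.le)
    _ = perspSup h (c * x) (c * w) := by
      rw [← mul_assoc, ← EReal.coe_mul, mul_inv_cancel₀ hc.ne', EReal.coe_one, one_mul]

lemma perspSup_eq_mul (hh : ∀ y, perspSup h y 1 = h y) (x : ℝ) {w : ℝ} (hw : 0 < w) :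
    perspSup h x w = w * h (x / w) := by
  rw [← hh, ← perspSup_mul hw, mul_div_cancel₀ x hw.ne', mul_one]

lemma antitone_perspSup (h0 : h 0 = 0) (x : ℝ) : Antitone (perspSup h x) := fun s t hst =>
  perspSup_le_iff.2 fun pc hpc => by
    have hc := affineMinorants_snd_nonpos h0 hpc
    refine le_trans ?_ (le_perspSup hpc x s)
    exact_mod_cast (by nlinarith : pc.1 * x + pc.2 * t ≤ pc.1 * x + pc.2 * s)

lemma lowerSemicontinuous_perspSup (x : ℝ) : LowerSemicontinuous (perspSup h x) :=
  lowerSemicontinuous_biSup fun _ _ =>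
    (continuous_coe_real_ereal.comp (by fun_prop)).lowerSemicontinuous

lemma tendsto_perspSup_nhdsGT_zero (h0 : h 0 = 0) (x : ℝ) :
    Tendsto (perspSup h x) (𝓝[>] 0) (𝓝 (perspSup h x 0)) :=
  tendsto_order.2 ⟨fun _ hb => nhdsWithin_le_nhds (lowerSemicontinuous_perspSup x 0 _ hb),
    fun _ hb => eventually_nhdsWithin_of_forall fun _ hs =>
      (antitone_perspSup h0 x (le_of_lt hs)).trans_lt hb⟩

lemma perspCl_eq_perspSup (hh : ∀ y, perspSup h y 1 = h y) (h0 : h 0 = 0) (x : ℝ) {w : ℝ}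
    (hw : 0 ≤ w) : perspCl h x w = perspSup h x w := by
  rcases hw.lt_or_eq with hw | rfl
  · rw [perspCl, if_pos hw, perspSup_eq_mul hh x hw]
  · rw [perspCl, if_neg (lt_irrefl 0), if_pos rfl]
    refine ((tendsto_perspSup_nhdsGT_zero h0 x).congr' ?_).limUnder_eq
    filter_upwards [self_mem_nhdsWithin] with s hs using perspSup_eq_mul hh x hs

lemma apply_mul_le_of_perspSup_le (hh : ∀ y, perspSup h y 1 = h y) (h0 : h 0 = 0)
    {x w τ s : ℝ} (hτ : perspSup h x w ≤ τ) (hs : 0 ≤ s) (hsw : s * w ≤ 1) :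
    h (s * x) ≤ (s * τ : ℝ) := by
  rw [← hh, perspSup_le_iff]
  intro pc hpc
  have hle : pc.1 * x + pc.2 * w ≤ τ := by exact_mod_cast (le_perspSup hpc x w).trans hτ
  have hc := affineMinorants_snd_nonpos h0 hpc
  exact_mod_cast (by nlinarith : pc.1 * (s * x) + pc.2 * 1 ≤ s * τ)

lemma setOf_perspSup_le_eq_biInter :
    {u : ℝ × ℝ × ℝ | perspSup h u.2.1 u.2.2 ≤ u.1} =
      ⋂ pc ∈ affineMinorants h, {u | pc.1 * u.2.1 + pc.2 * u.2.2 ≤ u.1} := by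
  ext u
  rw [mem_iInter₂]
  exact perspSup_le_iff.trans (forall₂_congr fun _ _ => EReal.coe_le_coe_iff)

lemma isClosed_setOf_perspSup_le : IsClosed {u : ℝ × ℝ × ℝ | perspSup h u.2.1 u.2.2 ≤ u.1} := by
  rw [setOf_perspSup_le_eq_biInter]
  exact isClosed_biInter fun _ _ => isClosed_le (by fun_prop) (by fun_prop)

lemma convex_setOf_perspSup_le : Convex ℝ {u : ℝ × ℝ × ℝ | perspSup h u.2.1 u.2.2 ≤ u.1} := by
  rw [setOf_perspSup_le_eq_biInter]
  refine convex_iInter₂ fun pc _ u hu v hv s t hs ht hst => ?_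
  simp only [mem_ofPred_eq, Prod.fst_add, Prod.snd_add, Prod.smul_fst, Prod.smul_snd,
    smul_eq_mul] at hu hv ⊢
  linear_combination s * hu + t * hv

end PerspSup

lemma IsClosed.image_fst_of_isCompact {X Y : Type*} [TopologicalSpace X] [TopologicalSpace Y]
    {A : Set (X × Y)} {K : Set Y} (hA : IsClosed A) (hK : IsCompact K) (hAK : ∀ q ∈ A, q.2 ∈ K) :
    IsClosed (Prod.fst '' A) := by
  have := isCompact_iff_compactSpace.1 hK
  have hcont : Continuous (Prod.map id (↑) : X × K → X × Y) :=
    continuous_id.prodMap continuous_subtype_val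
  convert isClosedMap_fst_of_compactSpace _ (hA.preimage hcont) using 1
  ext x
  constructor
  · rintro ⟨q, hq, rfl⟩
    exact ⟨(q.1, ⟨q.2, hAK q hq⟩), hq, rfl⟩
  · rintro ⟨q, hq, rfl⟩
    exact ⟨_, hq, rfl⟩

def linealitySpace (R : Type*) {E : Type*} [Ring R] [AddCommGroup E] [Module R E] (C : Set E) :
    Submodule R E where
  carrier := {v | ∀ c : R, ∀ p ∈ C, p + c • v ∈ C}
  add_mem' {v w} hv hw c p hp := by simpa [smul_add, add_assoc] using hw c _ (hv c p hp)
  zero_mem' c p hp := by simpa using hp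
  smul_mem' r v hv c p hp := by simpa [smul_smul] using hv (c * r) p hp

section Recession

variable {E : Type*} [AddCommGroup E] [Module ℝ E] [TopologicalSpace E] [IsTopologicalAddGroup E]
  [ContinuousSMul ℝ E]

lemma Convex.add_mem_closure_of_forall_pos_smul {C : Set E} (hC : Convex ℝ C) {q v : E}
    (hray : ∀ s : ℝ, 0 < s → q + s • v ∈ C) {p : E} (hp : p ∈ closure C) :
    p + v ∈ closure C := by
  have hmem : ∀ μ ∈ Ioo (0 : ℝ) 1, p + v + μ • (q - p) ∈ closure C := fun μ hμ => by
    convert hC.closure hp (subset_closure (hray μ⁻¹ (inv_pos.2 hμ.1))) (sub_nonneg.2 hμ.2.le)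
      hμ.1.le (by ring) using 1
    rw [smul_add, smul_smul, mul_inv_cancel₀ hμ.1.ne', one_smul, sub_smul, one_smul, smul_sub]
    abel
  have hlim : Tendsto (fun μ : ℝ => p + v + μ • (q - p)) (𝓝[>] 0) (𝓝 (p + v)) := by
    have : Continuous (fun μ : ℝ => p + v + μ • (q - p)) := by fun_prop
    simpa using (this.tendsto 0).mono_left nhdsWithin_le_nhds
  exact isClosed_closure.mem_of_tendsto hlim (mem_of_superset (Ioo_mem_nhdsGT one_pos) hmem)

lemma Convex.mem_linealitySpace_closure {C : Set E} (hC : Convex ℝ C) {q v : E}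
    (hline : ∀ s : ℝ, q + s • v ∈ C) :
    v ∈ linealitySpace ℝ (closure C) := fun c _ hp =>
  hC.add_mem_closure_of_forall_pos_smul (fun s _ => by simpa [smul_smul] using hline (s * c)) hp

end Recession

lemma SimpleGraph.Reachable.sub_mem {V E S : Type*} [AddCommGroup E] [SetLike S E]
    [AddSubgroupClass S E] {G : SimpleGraph V} {P : S} {f : V → E}
    (hadj : ∀ i j, G.Adj i j → f i - f j ∈ P) {i j : V} (hij : G.Reachable i j) :
    f i - f j ∈ P := by
  obtain ⟨w⟩ := hij
  induction w with
  | nil => simp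
  | cons hadj' _ ih => simpa using add_mem (hadj _ _ hadj') ih

lemma SimpleGraph.Connected.mem_of_dotProduct_eq_zero {ι : Type*} [Fintype ι] [DecidableEq ι]
    {G : SimpleGraph ι} (hG : G.Connected) {a : ι → ℝ} (ha : ∀ i, a i ≠ 0)
    {P : Submodule ℝ (ι → ℝ)}
    (hadj : ∀ i j, G.Adj i j → Pi.single i (a i)⁻¹ - Pi.single j (a j)⁻¹ ∈ P)
    {v : ι → ℝ} (hv : a ⬝ᵥ v = 0) : v ∈ P := by
  obtain ⟨i₀⟩ := hG.nonempty
  have hv_eq : v = ∑ i, (a i * v i) • (Pi.single i (a i)⁻¹ - Pi.single i₀ (a i₀)⁻¹ : ι → ℝ) := by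
    simp only [smul_sub, Finset.sum_sub_distrib, ← Finset.sum_smul]
    rw [show ∑ i, a i * v i = 0 from hv, zero_smul, sub_zero]
    conv_lhs => rw [← Finset.univ_sum_single v]
    refine Finset.sum_congr rfl fun i _ => ?_
    rw [← Pi.single_smul', smul_eq_mul, mul_comm (a i), mul_inv_cancel_right₀ (ha i)]
  rw [hv_eq]
  exact P.sum_mem fun i _ => P.smul_mem _ ((hG.preconnected i i₀).sub_mem hadj)

section RankOne

variable {d : ℕ} (Z : Set (Fin d → ℝ)) (a : Fin d → ℝ) (h : ℝ → EReal)

/-- The set `T` of the statement. -/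
def rankOneSet : Set (ℝ × (Fin d → ℝ) × (Fin d → ℝ)) :=
  {p | p.2.2 ∈ Z ∧ h (a ⬝ᵥ p.2.1) ≤ (p.1 : EReal) ∧ ∀ i, p.2.1 i * (1 - p.2.2 i) = 0}

def deltaOne : Set (ℝ × (Fin d → ℝ)) :=
  {q | (q.1 = 0 ∨ q.1 = 1) ∧ q.2 ∈ Z ∧ q.1 ≤ ∑ i, q.2 i}

/-- The right-hand side of the statement, with `perspSup` in place of `h^π`. -/
def perspRelaxation : Set (ℝ × (Fin d → ℝ) × (Fin d → ℝ)) :=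
  {p | ∃ w, perspSup h (a ⬝ᵥ p.2.1) w ≤ (p.1 : EReal) ∧ (w, p.2.2) ∈ convexHull ℝ (deltaOne Z)}

variable {Z a h}

lemma graphOfZ_adj {i j : Fin d} (hij : (graphOfZ Z).Adj i j) : ∃ z ∈ Z, z i = 1 ∧ z j = 1 := by
  obtain ⟨-, ⟨z, hz, hzi, hzj⟩ | ⟨z, hz, hzj, hzi⟩⟩ := (SimpleGraph.fromRel_adj _ _ _).1 hij <;>
    exact ⟨z, hz, hzi, hzj⟩

lemma one_le_sum_iff_exists_eq_one {ι : Type*} [Fintype ι] {z : ι → ℝ}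
    (hz : ∀ i, z i = 0 ∨ z i = 1) : 1 ≤ ∑ i, z i ↔ ∃ i, z i = 1 := by
  have hnonneg (i : ι) : 0 ≤ z i := by rcases hz i with h | h <;> simp [h]
  refine ⟨fun hsum => ?_, fun ⟨i, hi⟩ => hi ▸ Finset.single_le_sum (fun j _ => hnonneg j)
    (Finset.mem_univ i)⟩
  by_contra! hne
  have : ∑ i, z i = 0 := Finset.sum_eq_zero fun i _ => (hz i).resolve_right (hne i)
  linarith

lemma exists_mem_eq_one (hZ01 : ∀ z ∈ Z, ∀ i, z i = 0 ∨ z i = 1) (hZne : Z ≠ {0})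
    (hZ : Z.Nonempty) : ∃ z ∈ Z, ∃ i, z i = 1 := by
  by_contra! hno
  exact hZne (eq_singleton_iff_nonempty_unique_mem.2
    ⟨hZ, fun z hz => funext fun i => (hZ01 z hz i).resolve_right (hno z hz i)⟩)

lemma deltaOne_finite (hZ01 : ∀ z ∈ Z, ∀ i, z i = 0 ∨ z i = 1) : (deltaOne Z).Finite := by
  have h01 : ({0, 1} : Set ℝ).Finite := (finite_singleton 1).insert 0
  have hZ : Z.Finite := (Finite.pi (t := fun _ : Fin d => ({0, 1} : Set ℝ)) fun _ => h01).subset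
    fun z hz i _ => hZ01 z hz i
  exact (h01.prod hZ).subset fun q hq => ⟨hq.1, hq.2.1⟩

lemma mem_Icc_of_mem_convexHull_deltaOne {q : ℝ × (Fin d → ℝ)}
    (hq : q ∈ convexHull ℝ (deltaOne Z)) : q.1 ∈ Icc (0 : ℝ) 1 := by
  refine convexHull_min (t := Prod.fst ⁻¹' Icc 0 1) ?_
    ((convex_Icc 0 1).linear_preimage (LinearMap.fst ℝ ℝ (Fin d → ℝ))) hq
  rintro q ⟨h01 | h01, -⟩ <;> simp [h01]

lemma zero_mem_rankOneSet (h0 : h 0 = 0) {z : Fin d → ℝ} (hz : z ∈ Z) :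
    ((0 : ℝ), (0 : Fin d → ℝ), z) ∈ rankOneSet Z a h :=
  ⟨hz, by simp [h0], by simp⟩

lemma smul_single_mem_rankOneSet (ha : ∀ i, a i ≠ 0) {z : Fin d → ℝ} (hz : z ∈ Z) {i : Fin d}
    (hzi : z i = 1) {r t : ℝ} (hr : h r ≤ (t : EReal)) :
    (t, r • Pi.single i (a i)⁻¹, z) ∈ rankOneSet Z a h := by
  refine ⟨hz, by simpa [dotProduct_smul, dotProduct_single, ha i] using hr, fun k => ?_⟩
  by_cases hk : k = i
  · simp [hk, hzi]
  · simp [hk]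

lemma smul_sub_single_mem_rankOneSet (ha : ∀ i, a i ≠ 0) (h0 : h 0 = 0) {z : Fin d → ℝ}
    (hz : z ∈ Z) {i j : Fin d} (hzi : z i = 1) (hzj : z j = 1) (c : ℝ) :
    ((0 : ℝ), c • (Pi.single i (a i)⁻¹ - Pi.single j (a j)⁻¹), z) ∈ rankOneSet Z a h := by
  refine ⟨hz, by simp [dotProduct_smul, dotProduct_sub, dotProduct_single, ha, h0], fun k => ?_⟩
  by_cases hki : k = i
  · simp [hki, hzi]
  by_cases hkj : k = j
  · simp [hkj, hzj]
  simp [hki, hkj]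

lemma rankOneSet_subset_perspRelaxation (hZ01 : ∀ z ∈ Z, ∀ i, z i = 0 ∨ z i = 1) (h0 : h 0 = 0) :
    rankOneSet Z a h ⊆ perspRelaxation Z a h := by
  rintro ⟨τ, x, z⟩ ⟨hz, hτ, hxz⟩
  by_cases hx : x = 0
  · subst hx
    refine ⟨0, perspSup_le_iff.2 fun pc _ => by simpa [h0] using hτ, subset_convexHull ℝ _
      ⟨Or.inl rfl, hz, Finset.sum_nonneg fun i _ => ?_⟩⟩
    rcases hZ01 z hz i with h | h <;> simp [h]
  · obtain ⟨i, hi⟩ := Function.ne_iff.1 hx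
    have hzi : z i = 1 := by linarith [(mul_eq_zero.1 (hxz i)).resolve_left hi]
    exact ⟨1, (perspSup_one_le _).trans hτ, subset_convexHull ℝ _
      ⟨Or.inr rfl, hz, (one_le_sum_iff_exists_eq_one (hZ01 z hz)).2 ⟨i, hzi⟩⟩⟩

lemma convex_perspRelaxation : Convex ℝ (perspRelaxation Z a h) := by
  rintro p ⟨w₁, hw₁, hq₁⟩ q ⟨w₂, hw₂, hq₂⟩ s t hs ht hst
  refine ⟨s * w₁ + t * w₂, ?_, by simpa using convex_convexHull ℝ _ hq₁ hq₂ hs ht hst⟩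
  have := convex_setOf_perspSup_le (h := h) (x := (p.1, a ⬝ᵥ p.2.1, w₁)) hw₁
    (y := (q.1, a ⬝ᵥ q.2.1, w₂)) hw₂ hs ht hst
  simpa [dotProduct_add, dotProduct_smul] using this

lemma isClosed_perspRelaxation (hZ01 : ∀ z ∈ Z, ∀ i, z i = 0 ∨ z i = 1) :
    IsClosed (perspRelaxation Z a h) := by
  let A : Set ((ℝ × (Fin d → ℝ) × (Fin d → ℝ)) × ℝ) :=
    {q | perspSup h (a ⬝ᵥ q.1.2.1) q.2 ≤ (q.1.1 : EReal) ∧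
      (q.2, q.1.2.2) ∈ convexHull ℝ (deltaOne Z)}
  have hcont₁ : Continuous fun q : (ℝ × (Fin d → ℝ) × (Fin d → ℝ)) × ℝ =>
      (q.1.1, a ⬝ᵥ q.1.2.1, q.2) := by fun_prop
  have hcont₂ : Continuous fun q : (ℝ × (Fin d → ℝ) × (Fin d → ℝ)) × ℝ => (q.2, q.1.2.2) := by
    fun_prop
  have hA : IsClosed A := (isClosed_setOf_perspSup_le.preimage hcont₁).inter
    (((deltaOne_finite hZ01).isCompact_convexHull ℝ).isClosed.preimage hcont₂)
  have : perspRelaxation Z a h = Prod.fst '' A := by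
    ext p
    exact ⟨fun ⟨w, hw⟩ => ⟨(p, w), hw, rfl⟩, fun ⟨q, hq, hqp⟩ => hqp ▸ ⟨q.2, hq⟩⟩
  rw [this]
  exact hA.image_fst_of_isCompact isCompact_Icc
    fun q hq => mem_Icc_of_mem_convexHull_deltaOne hq.2

lemma exists_mem_convexHull_rankOneSet (hZ01 : ∀ z ∈ Z, ∀ i, z i = 0 ∨ z i = 1)
    (ha : ∀ i, a i ≠ 0) (h0 : h 0 = 0) {r θ : ℝ} (hr : h r ≤ (θ : EReal))
    {q : ℝ × (Fin d → ℝ)} (hq : q ∈ convexHull ℝ (deltaOne Z)) :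
    ∃ x, a ⬝ᵥ x = r * q.1 ∧ (θ * q.1, x, q.2) ∈ convexHull ℝ (rankOneSet Z a h) := by
  refine convexHull_min (t := {q | ∃ x, a ⬝ᵥ x = r * q.1 ∧
    (θ * q.1, x, q.2) ∈ convexHull ℝ (rankOneSet Z a h)}) ?_ ?_ hq
  · rintro ⟨w, z⟩ ⟨rfl | rfl, hz, hsum⟩
    · exact ⟨0, by simp, subset_convexHull ℝ _ (by simpa using zero_mem_rankOneSet h0 hz)⟩
    · obtain ⟨i, hi⟩ := (one_le_sum_iff_exists_eq_one (hZ01 z hz)).1 hsum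
      exact ⟨r • Pi.single i (a i)⁻¹, by simp [dotProduct_smul, dotProduct_single, ha i],
        subset_convexHull ℝ _ (by simpa using smul_single_mem_rankOneSet ha hz hi hr)⟩
  · rintro q₁ ⟨x₁, hx₁, hm₁⟩ q₂ ⟨x₂, hx₂, hm₂⟩ s t hs ht hst
    refine ⟨s • x₁ + t • x₂, by simp [dotProduct_add, dotProduct_smul, hx₁, hx₂]; ring, ?_⟩
    convert convex_convexHull ℝ _ hm₁ hm₂ hs ht hst using 1
    ext <;> simp
    ring

lemma dotProduct_eq_zero_mem_linealitySpace (hconn : (graphOfZ Z).Connected)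
    (ha : ∀ i, a i ≠ 0) (h0 : h 0 = 0) {v : Fin d → ℝ} (hv : a ⬝ᵥ v = 0) :
    ((0 : ℝ), v, (0 : Fin d → ℝ)) ∈
      linealitySpace ℝ (closure (convexHull ℝ (rankOneSet Z a h))) := by
  let P := (linealitySpace ℝ (closure (convexHull ℝ (rankOneSet Z a h)))).comap
    (LinearMap.inr ℝ ℝ _ ∘ₗ LinearMap.inl ℝ (Fin d → ℝ) (Fin d → ℝ))
  refine (hconn.mem_of_dotProduct_eq_zero ha (P := P) (fun i j hij => ?_) hv : v ∈ P)
  obtain ⟨z, hz, hzi, hzj⟩ := graphOfZ_adj hij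
  refine (convex_convexHull ℝ _).mem_linealitySpace_closure (q := (0, 0, z)) fun s => ?_
  exact subset_convexHull ℝ _ (by simpa using smul_sub_single_mem_rankOneSet ha h0 hz hzi hzj s)

lemma perspRelaxation_subset_closure (hZ01 : ∀ z ∈ Z, ∀ i, z i = 0 ∨ z i = 1) (hZne : Z ≠ {0})
    (hconn : (graphOfZ Z).Connected) (ha : ∀ i, a i ≠ 0) (hh : ∀ y, perspSup h y 1 = h y)
    (h0 : h 0 = 0) : perspRelaxation Z a h ⊆ closure (convexHull ℝ (rankOneSet Z a h)) := by
  rintro ⟨τ, x, z⟩ ⟨w, hτ, hwz⟩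
  suffices ∃ x', a ⬝ᵥ x' = a ⬝ᵥ x ∧ (τ, x', z) ∈ closure (convexHull ℝ (rankOneSet Z a h)) by
    obtain ⟨x', hx', hmem⟩ := this
    simpa using dotProduct_eq_zero_mem_linealitySpace hconn ha h0 (v := x - x')
      (by simp [dotProduct_sub, hx']) 1 _ hmem
  rcases (mem_Icc_of_mem_convexHull_deltaOne hwz).1.lt_or_eq with hw | rfl
  · have hle := apply_mul_le_of_perspSup_le hh h0 hτ (inv_nonneg.2 hw.le)
      (inv_mul_cancel₀ hw.ne').le
    obtain ⟨x', hx', hmem⟩ := exists_mem_convexHull_rankOneSet hZ01 ha h0 hle hwz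
    have hcancel (c : ℝ) : w⁻¹ * c * w = c := by field_simp
    exact ⟨x', by rwa [hcancel] at hx', subset_closure (by rwa [hcancel] at hmem)⟩
  · obtain ⟨x', hx', hmem⟩ := exists_mem_convexHull_rankOneSet (r := 0) (θ := 0) hZ01 ha h0
      (by simp [h0]) hwz
    obtain ⟨q, hq⟩ := convexHull_nonempty_iff.1 ⟨_, hwz⟩
    obtain ⟨zs, hzs, i, hi⟩ := exists_mem_eq_one hZ01 hZne ⟨q.2, hq.2.1⟩
    -- `h^π(a ⬝ᵥ x, 0) ≤ τ` makes `(τ, (a ⬝ᵥ x) • e_i / a_i, 0)` a recession direction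
    refine ⟨x' + (a ⬝ᵥ x) • Pi.single i (a i)⁻¹, by simp_all [dotProduct_add, dotProduct_smul,
      dotProduct_single], ?_⟩
    have := (convex_convexHull ℝ (rankOneSet Z a h)).add_mem_closure_of_forall_pos_smul
      (q := (0, 0, zs)) (v := (τ, (a ⬝ᵥ x) • Pi.single i (a i)⁻¹, 0)) (fun s hs => ?_)
      (subset_closure hmem)
    · simpa using this
    refine subset_convexHull ℝ _ ?_
    simpa [smul_smul] using smul_single_mem_rankOneSet ha hzs hi
      (apply_mul_le_of_perspSup_le hh h0 hτ hs.le (by simp))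

theorem closure_convexHull_rankOneSet (hZ01 : ∀ z ∈ Z, ∀ i, z i = 0 ∨ z i = 1) (hZne : Z ≠ {0})
    (hconn : (graphOfZ Z).Connected) (ha : ∀ i, a i ≠ 0) (hh : ∀ y, perspSup h y 1 = h y)
    (h0 : h 0 = 0) : closure (convexHull ℝ (rankOneSet Z a h)) = perspRelaxation Z a h :=
  (closure_minimal (convexHull_min (rankOneSet_subset_perspRelaxation hZ01 h0)
    convex_perspRelaxation) (isClosed_perspRelaxation hZ01)).antisymm
    (perspRelaxation_subset_closure hZ01 hZne hconn ha hh h0)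

end RankOne

/-- Extended perspective formulation of `cl conv(T)` for a rank-one function, with
`X = ℝ^d` and connected `G_Z`:
`cl conv(T) = {(τ, x, z) : ∃ w, h^π(aᵀx, w) ≤ τ, (w, z) ∈ conv(Δ₁)}` where
`Δ₁ = {(w, z) ∈ {0,1} × Z : w ≤ 1ᵀz}`. -/
theorem clconv_T_connected {d : ℕ}
    (Z : Set (Fin d → ℝ)) (hZ01 : ∀ z ∈ Z, ∀ i, z i = 0 ∨ z i = 1)
    (hZne : Z ≠ {0}) (hconn : (graphOfZ Z).Connected)
    (a : Fin d → ℝ) (ha : ∀ i, a i ≠ 0)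
    (h : ℝ → EReal)
    (hbot : ∀ x : ℝ, h x ≠ ⊥) (hnetop : ∃ x : ℝ, h x ≠ ⊤)
    (hlsc : LowerSemicontinuous h)
    (hconv : Convex ℝ {u : ℝ × ℝ | h u.2 ≤ (u.1 : EReal)})
    (h0 : h 0 = 0) :
    closure (convexHull ℝ
      {p : ℝ × (Fin d → ℝ) × (Fin d → ℝ) |
        p.2.2 ∈ Z ∧ h (∑ i, a i * p.2.1 i) ≤ (p.1 : EReal) ∧
        ∀ i, p.2.1 i * (1 - p.2.2 i) = 0})
      = {p : ℝ × (Fin d → ℝ) × (Fin d → ℝ) | ∃ w : ℝ,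
          perspCl h (∑ i, a i * p.2.1 i) w ≤ (p.1 : EReal) ∧
          (w, p.2.2) ∈ convexHull ℝ
            {q : ℝ × (Fin d → ℝ) |
              (q.1 = 0 ∨ q.1 = 1) ∧ q.2 ∈ Z ∧ q.1 ≤ ∑ i, q.2 i}} := by
  have hh := perspSup_one hbot hnetop hlsc hconv
  refine (closure_convexHull_rankOneSet hZ01 hZne hconn ha hh h0).trans
    (ext fun p => exists_congr fun w => and_congr_left fun hw => ?_)
  rw [perspCl_eq_perspSup hh h0 _ (mem_Icc_of_mem_convexHull_deltaOne hw).1]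
  rfl
end
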